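/- arXiv:1212.5888 — 3 statements merged into one kernel-verified Lean document; each statement's English description precedes it below -/
import Mathlib

section
/- Let Ξ_{s,t} be a two-parameter ℝ^e-valued function on {0 ≤ s ≤ t ≤ T} satisfying the additivity-defect relation Ξ_{s,t} − Ξ_{s,u} − Ξ_{u,t} = X^-_{s,u} ⊗ X_{u,t} for a càdlàg X, and suppose t ↦ Ξ_{0,t} is càdlàg. Then for every ε > 0 there exists a finite partition 0 = t₀ < t₁ < ⋯ < t_n = T such that the oscillation of Ξ on each open interval (t_i, t_{i+1}) is at most ε, where Osc(Ξ, I) := sup{|Ξ_{u,v}| : u ≤ v, u,v ∈ I}. -/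
/-!
Taking `s = 0` in the relation gives
`Ξ_{u,v} = Ξ_{0,v} - Ξ_{0,u} - (X⁻_u - X_0) ⊗ (X_v - X_u)`.
A càdlàg path `g` on `[0, T]` admits, for every `δ > 0`, a partition on whose open cells it
oscillates by at most `δ`; with `δ = 1` this shows that `g` and its left limits are bounded.
Applying it to `g = (Ξ_{0,·}, X)` with `δ = ε / (1 + C)`, where `C` bounds `X⁻ - X_0` on
`[0, T]`, each cell then has `‖Ξ_{u,v}‖ ≤ δ + C δ = ε`.
-/

open scoped BigOperators
open MeasureTheory

noncomputable section

def IsPartition (a b : ℝ) (P : Finset ℝ) : Prop :=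
  a ∈ P ∧ b ∈ P ∧ ∀ x ∈ P, x ∈ Set.Icc a b

noncomputable def nextPt (P : Finset ℝ) (b x : ℝ) : ℝ :=
  WithBot.unbotD b (P.filter (fun y => x < y)).min

noncomputable def varSum {E : Type*} [NormedAddCommGroup E] (X : ℝ → E) (p b : ℝ)
    (P : Finset ℝ) : ℝ :=
  ∑ x ∈ P.erase b, ‖X (nextPt P b x) - X x‖ ^ p

def HasFiniteVar {E : Type*} [NormedAddCommGroup E] (X : ℝ → E) (p a b : ℝ) : Prop :=
  ∃ M : ℝ, ∀ P : Finset ℝ, IsPartition a b P → varSum X p b P ≤ M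

noncomputable def varNorm {E : Type*} [NormedAddCommGroup E] (X : ℝ → E) (p a b : ℝ) : ℝ :=
  (sSup {v | ∃ P : Finset ℝ, IsPartition a b P ∧ v = varSum X p b P}) ^ (1 / p)

def Cadlag {E : Type*} [NormedAddCommGroup E] (X : ℝ → E) (a b : ℝ) : Prop :=
  (∀ t ∈ Set.Ico a b, Filter.Tendsto X (nhdsWithin t (Set.Ici t)) (nhds (X t))) ∧
  (∀ t ∈ Set.Ioc a b, ∃ L : E, Filter.Tendsto X (nhdsWithin t (Set.Iio t)) (nhds L))

noncomputable def minus {E : Type*} [NormedAddCommGroup E] (X : ℝ → E) (a t : ℝ) : E :=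
  if t ≤ a then X a else Function.leftLim X t

noncomputable def jump {E : Type*} [NormedAddCommGroup E] (X : ℝ → E) (a t : ℝ) : E :=
  X t - minus X a t

def RRSTendsto {E : Type*} [NormedAddCommGroup E] (a b : ℝ) (S : Finset ℝ → E) (L : E) : Prop :=
  ∀ ε > 0, ∃ P₀ : Finset ℝ, IsPartition a b P₀ ∧
    ∀ P : Finset ℝ, IsPartition a b P → P₀ ⊆ P → ‖S P - L‖ < ε


open Set Filter Topology Metric Bornology

def PairwiseOnIoo (R : ℝ → ℝ → Prop) (x y : ℝ) : Prop :=
  ∀ u v, x < u → u ≤ v → v < y → R u v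

theorem PairwiseOnIoo.mono {R : ℝ → ℝ → Prop} {x y x' y' : ℝ} (h : PairwiseOnIoo R x y)
    (hx : x ≤ x') (hy : y' ≤ y) : PairwiseOnIoo R x' y' :=
  fun u v hu huv hv => h u v (hx.trans_lt hu) huv (hv.trans_le hy)

def HasFinePartition (R : ℝ → ℝ → Prop) (a b : ℝ) : Prop :=
  ∃ n : ℕ, ∃ τ : Fin (n + 1) → ℝ, StrictMono τ ∧ τ 0 = a ∧ τ (Fin.last n) = b ∧
    ∀ i : Fin n, PairwiseOnIoo R (τ i.castSucc) (τ i.succ)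

namespace HasFinePartition

variable {R S : ℝ → ℝ → Prop} {a b c : ℝ}

theorem refl (R : ℝ → ℝ → Prop) (a : ℝ) : HasFinePartition R a a :=
  ⟨0, fun _ => a, Fin.strictMono_iff_lt_succ.2 fun i => i.elim0, rfl, rfl, fun i => i.elim0⟩

theorem snoc (h : HasFinePartition R a b) (hbc : b < c) (hR : PairwiseOnIoo R b c) :
    HasFinePartition R a c := by
  obtain ⟨n, τ, hτ, h0, hn, hcell⟩ := h
  refine ⟨n + 1, Fin.snoc τ c, ?_, ?_, Fin.snoc_last _ _, Fin.lastCases ?_ fun i => ?_⟩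
  · refine Fin.strictMono_iff_lt_succ.2 (Fin.lastCases ?_ fun i => ?_)
    · simpa [hn] using hbc
    · rw [Fin.succ_castSucc, Fin.snoc_castSucc, Fin.snoc_castSucc]
      exact hτ i.castSucc_lt_succ
  · rw [← Fin.castSucc_zero, Fin.snoc_castSucc, h0]
  · simpa [hn] using hR
  · rw [Fin.succ_castSucc, Fin.snoc_castSucc, Fin.snoc_castSucc]
    exact hcell i

theorem mono (h : HasFinePartition R a b)
    (hRS : ∀ u v, a < u → u ≤ v → v < b → R u v → S u v) : HasFinePartition S a b := by
  obtain ⟨n, τ, hτ, rfl, rfl, hcell⟩ := h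
  refine ⟨n, τ, hτ, rfl, rfl, fun i u v hu huv hv => hRS u v ?_ huv ?_ (hcell i u v hu huv hv)⟩
  · exact (hτ.monotone (Fin.zero_le _)).trans_lt hu
  · exact hv.trans_le (hτ.monotone (Fin.le_last _))

/-- Real induction: the supremum of the right endpoints of fine partitions starting at `a` is
attained thanks to `hleft`, and it cannot lie below `b` thanks to `hright`. -/
theorem of_local (hab : a ≤ b)
    (hright : ∀ t ∈ Ico a b, ∃ t' > t, PairwiseOnIoo R t t')
    (hleft : ∀ t ∈ Ioc a b, ∃ t' < t, PairwiseOnIoo R t' t) : HasFinePartition R a b := by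
  set A := {t | t ≤ b ∧ HasFinePartition R a t}
  have haA : a ∈ A := ⟨hab, refl R a⟩
  have hA : BddAbove A := ⟨b, fun _ ht => ht.1⟩
  have hcb : sSup A ≤ b := csSup_le ⟨a, haA⟩ fun _ ht => ht.1
  have hcA : sSup A ∈ A := by
    rcases (le_csSup hA haA).eq_or_lt with hac | hac
    · exact hac ▸ haA
    obtain ⟨l, hlc, hl⟩ := hleft _ ⟨hac, hcb⟩
    obtain ⟨t, htA, hlt⟩ := exists_lt_of_lt_csSup ⟨a, haA⟩ hlc
    rcases (le_csSup hA htA).eq_or_lt with htc | htc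
    · exact htc ▸ htA
    exact ⟨hcb, htA.2.snoc htc (hl.mono hlt.le le_rfl)⟩
  obtain hcb | hcb := hcb.eq_or_lt
  · exact hcb ▸ hcA.2
  obtain ⟨t', hct', hR⟩ := hright _ ⟨le_csSup hA haA, hcb⟩
  have : min t' b ∈ A :=
    ⟨min_le_right _ _, hcA.2.snoc (lt_min hct' hcb) (hR.mono le_rfl (min_le_left _ _))⟩
  exact absurd (le_csSup hA this) (not_le.2 (lt_min hct' hcb))

end HasFinePartition

theorem Monotone.Icc_subset_range_union_iUnion_Ioo {n : ℕ} {τ : Fin (n + 1) → ℝ}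
    (hτ : Monotone τ) :
    Icc (τ 0) (τ (Fin.last n)) ⊆ range τ ∪ ⋃ i : Fin n, Ioo (τ i.castSucc) (τ i.succ) := by
  induction n with
  | zero => exact fun t ht => .inl ⟨0, le_antisymm ht.1 ht.2⟩
  | succ n ih =>
    intro t ht
    rcases le_or_gt t (τ (Fin.last n).castSucc) with htl | htl
    · rcases ih (hτ.comp Fin.strictMono_castSucc.monotone) ⟨ht.1, htl⟩ with ⟨i, hi⟩ | hi
      · exact .inl ⟨_, hi⟩
      · obtain ⟨i, hi⟩ := mem_iUnion.1 hi
        exact .inr (mem_iUnion.2 ⟨i.castSucc, by rwa [Fin.succ_castSucc]⟩)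
    · rcases ht.2.eq_or_lt with hlast | hlast
      · exact .inl ⟨_, hlast.symm⟩
      · exact .inr (mem_iUnion.2 ⟨Fin.last n, htl, by simpa using hlast⟩)

section Cadlag

variable {E F : Type*} [NormedAddCommGroup E] [NormedAddCommGroup F] {f : ℝ → E} {a b : ℝ}

theorem HasFinePartition.isBounded_image {δ : ℝ}
    (h : HasFinePartition (fun u v => dist (f u) (f v) ≤ δ) a b) : IsBounded (f '' Icc a b) := by
  obtain ⟨n, τ, hτ, rfl, rfl, hcell⟩ := h
  refine IsBounded.subset ?_ (image_mono hτ.monotone.Icc_subset_range_union_iUnion_Ioo)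
  rw [image_union, image_iUnion]
  refine ((finite_range τ).image f).isBounded.union
    (isBounded_iUnion.2 fun i => isBounded_iff.2 ⟨δ, ?_⟩)
  rintro _ ⟨u, hu, rfl⟩ _ ⟨v, hv, rfl⟩
  rcases le_total u v with huv | hvu
  · exact hcell i u v hu.1 huv hv.2
  · exact dist_comm (f u) (f v) ▸ hcell i v u hv.1 hvu hu.2

theorem exists_mem_forall_dist_lt_of_tendsto {l : Filter ℝ} [l.NeBot] {L : E}
    (h : Tendsto f l (𝓝 L)) {δ : ℝ} (hδ : 0 < δ) :
    ∃ s ∈ l, ∀ u ∈ s, ∀ v ∈ s, dist (f u) (f v) < δ := by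
  obtain ⟨s, hs, hsδ⟩ := (Metric.cauchy_iff.1 h.cauchy_map).2 δ hδ
  exact ⟨f ⁻¹' s, hs, fun u hu v hv => hsδ _ hu _ hv⟩

theorem Cadlag.prodMk {g : ℝ → F} (hf : Cadlag f a b) (hg : Cadlag g a b) :
    Cadlag (fun t => (f t, g t)) a b := by
  refine ⟨fun t ht => (hf.1 t ht).prodMk_nhds (hg.1 t ht), fun t ht => ?_⟩
  obtain ⟨L, hL⟩ := hf.2 t ht
  obtain ⟨M, hM⟩ := hg.2 t ht
  exact ⟨(L, M), hL.prodMk_nhds hM⟩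

theorem Cadlag.hasFinePartition (hf : Cadlag f a b) (hab : a ≤ b) {δ : ℝ} (hδ : 0 < δ) :
    HasFinePartition (fun u v => dist (f u) (f v) ≤ δ) a b := by
  refine .of_local hab (fun t ht => ?_) (fun t ht => ?_)
  · obtain ⟨s, hs, hsδ⟩ := exists_mem_forall_dist_lt_of_tendsto
      ((hf.1 t ht).mono_left (nhdsWithin_mono _ Ioi_subset_Ici_self)) hδ
    obtain ⟨t', ht', hst'⟩ := mem_nhdsGT_iff_exists_Ioo_subset.1 hs
    exact ⟨t', ht', fun u v hu huv hv =>
      (hsδ u (hst' ⟨hu, huv.trans_lt hv⟩) v (hst' ⟨hu.trans_le huv, hv⟩)).le⟩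
  · obtain ⟨L, hL⟩ := hf.2 t ht
    obtain ⟨s, hs, hsδ⟩ := exists_mem_forall_dist_lt_of_tendsto hL hδ
    obtain ⟨t', ht', hst'⟩ := mem_nhdsLT_iff_exists_Ioo_subset.1 hs
    exact ⟨t', ht', fun u v hu huv hv =>
      (hsδ u (hst' ⟨hu, huv.trans_lt hv⟩) v (hst' ⟨hu.trans_le huv, hv⟩)).le⟩

theorem Cadlag.minus_mem_closure_image (hf : Cadlag f a b) {t : ℝ} (ht : t ∈ Icc a b) :
    minus f a t ∈ closure (f '' Icc a b) := by
  unfold minus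
  split_ifs with hta
  · exact subset_closure (mem_image_of_mem f ⟨le_rfl, ht.1.trans ht.2⟩)
  obtain ⟨L, hL⟩ := hf.2 t ⟨not_le.1 hta, ht.2⟩
  rw [leftLim_eq_of_tendsto hL]
  refine mem_closure_of_tendsto hL (mem_of_superset (Ioo_mem_nhdsLT (not_le.1 hta)) ?_)
  exact fun u hu => mem_image_of_mem f ⟨hu.1.le, hu.2.le.trans ht.2⟩

theorem Cadlag.isBounded_image_minus (hf : Cadlag f a b) (hab : a ≤ b) :
    IsBounded (minus f a '' Icc a b) :=
  (hf.hasFinePartition hab one_pos).isBounded_image.closure.subset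
    (image_subset_iff.2 fun _ => hf.minus_mem_closure_image)

end Cadlag

theorem norm_outer_le {ι : Type*} [Fintype ι] (x y : EuclideanSpace ℝ ι) :
    ‖fun i j => x i * y j‖ ≤ ‖x‖ * ‖y‖ := by
  refine (pi_norm_le_iff_of_nonneg (by positivity)).2 fun i =>
    (pi_norm_le_iff_of_nonneg (by positivity)).2 fun j => ?_
  rw [norm_mul]
  exact mul_le_mul (PiLp.norm_apply_le x i) (PiLp.norm_apply_le y j) (norm_nonneg _)
    (norm_nonneg _)

theorem norm_le_of_sub_sub_eq_outer {ι : Type*} [Fintype ι] {A B C : ι → ι → ℝ}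
    {x x' y y' : EuclideanSpace ℝ ι}
    (h : (fun i j => A i j - B i j - C i j) = fun i j => (x' i - x i) * (y' j - y j)) :
    ‖C‖ ≤ ‖A - B‖ + ‖x' - x‖ * ‖y' - y‖ := by
  have hC : C = (A - B) - fun i j => (x' - x) i * (y' - y) j := by
    ext i j
    have := congrFun₂ h i j
    simp only [Pi.sub_apply, PiLp.sub_apply] at this ⊢
    linarith
  rw [hC]
  exact (norm_sub_le _ _).trans (add_le_add_right (norm_outer_le _ _) _)

/-- If `Ξ_{s,t}` satisfies the additivity-defect relation
`Ξ_{s,t} − Ξ_{s,u} − Ξ_{u,t} = X⁻_{s,u} ⊗ X_{u,t}` for a càdlàg `X`, and `t ↦ Ξ_{0,t}` is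
càdlàg, then for every `ε > 0` there is a finite partition `0 = t₀ < ⋯ < t_n = T` such that
the oscillation of `Ξ` on each open interval `(t_i, t_{i+1})` is at most `ε`. -/
theorem small_oscillation_partition
    {d : ℕ} (T : ℝ) (hT : 0 < T)
    (X : ℝ → EuclideanSpace ℝ (Fin d)) (hXc : Cadlag X 0 T)
    (Ξ : ℝ → ℝ → (Fin d → Fin d → ℝ))
    (hrel : ∀ s u t : ℝ, 0 ≤ s → s ≤ u → u ≤ t → t ≤ T →
      (fun i j => Ξ s t i j - Ξ s u i j - Ξ u t i j) =
        fun i j => (minus X 0 u i - minus X 0 s i) * (X t j - X u j))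
    (hΞc : Cadlag (fun t => Ξ 0 t) 0 T) :
    ∀ ε : ℝ, 0 < ε → ∃ n : ℕ, ∃ τ : Fin (n + 1) → ℝ,
      StrictMono τ ∧ τ 0 = 0 ∧ τ (Fin.last n) = T ∧
      ∀ i : Fin n, ∀ u v : ℝ, τ i.castSucc < u → u ≤ v → v < τ i.succ →
        ‖Ξ u v‖ ≤ ε := by
  intro ε hε
  obtain ⟨C, hC⟩ := isBounded_iff.1 (hXc.isBounded_image_minus hT.le)
  have hminus : ∀ u ∈ Icc 0 T, dist (minus X 0 u) (minus X 0 0) ≤ C := fun u hu =>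
    hC (mem_image_of_mem _ hu) (mem_image_of_mem _ ⟨le_rfl, hT.le⟩)
  have hC0 : 0 ≤ C := dist_self (minus X 0 0) ▸ hminus 0 ⟨le_rfl, hT.le⟩
  set δ := ε / (1 + C)
  refine ((hΞc.prodMk hXc).hasFinePartition hT.le (δ := δ) (by positivity)).mono
    fun u v hu huv hv hδ => ?_
  rw [Prod.dist_eq, max_le_iff, dist_comm, dist_eq_norm, dist_comm, dist_eq_norm] at hδ
  calc ‖Ξ u v‖ ≤ ‖Ξ 0 v - Ξ 0 u‖ + ‖minus X 0 u - minus X 0 0‖ * ‖X v - X u‖ :=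
        norm_le_of_sub_sub_eq_outer (hrel 0 u v le_rfl hu.le huv hv.le)
    _ ≤ δ + C * δ := by
        gcongr
        exacts [hδ.1, dist_eq_norm (minus X 0 u) _ ▸ hminus u ⟨hu.le, huv.trans hv.le⟩, hδ.2]
    _ = δ * (1 + C) := by ring
    _ = ε := div_mul_cancel₀ ε (by positivity)
end
end

section
/- Let C ∈ T^{(4)}(ℝ^d) have symmetric level-4 component π₄C (e.g. π₄C = (1/4!)∫ y^{⊗4} K(dy)), and suppose the expected level-4 signature satisfies E[𝐗^{(4)}_{s,t}] = exp(C(t−s)) with 𝐗 group-like. Then for i ≠ j, E[(𝔸^{i,j}_{s,t})²] = O(|t−s|²), where 𝔸 = (𝕏 − 𝕏ᵀ)/2 is the antisymmetric part of the level-2 component; indeed (𝔸^{i,j}_{s,t})² = 𝐗^{iijj}_{s,t} − 𝐗^{ijji}_{s,t} − 𝐗^{jiij}_{s,t} + 𝐗^{jjii}_{s,t} by the shuffle product formula, and the first-order term in (t−s) vanishes: C^{iijj} − C^{ijji} − C^{jiij} + C^{jjii} = 0 by symmetry of π₄C. -/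
open scoped BigOperators
open MeasureTheory

noncomputable section

/-- Truncated (at level `N`) tensor-algebra multiplication, in the model of
`T^{(N)}(ℝ^d)` as real-valued functions on words over the alphabet `Fin d`. -/
noncomputable def taMul (N : ℕ) {d : ℕ} (x y : List (Fin d) → ℝ) : List (Fin d) → ℝ :=
  fun w => if w.length ≤ N then
    ∑ i ∈ Finset.range (w.length + 1), x (w.take i) * y (w.drop i) else 0

/-- The unit of the tensor algebra. -/
def taOne {d : ℕ} : List (Fin d) → ℝ := fun w => if w = [] then 1 else 0

/-- Powers in the truncated tensor algebra. -/
noncomputable def taPow (N : ℕ) {d : ℕ} (x : List (Fin d) → ℝ) : ℕ → (List (Fin d) → ℝ)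
  | 0 => taOne
  | k + 1 => taMul N x (taPow N x k)

/-- Truncated tensor exponential `exp^{(N)}(x) = ∑_{k=0}^N x^{⊗k}/k!`. -/
noncomputable def taExp (N : ℕ) {d : ℕ} (x : List (Fin d) → ℝ) : List (Fin d) → ℝ :=
  fun w => ∑ k ∈ Finset.range (N + 1), ((k.factorial : ℝ))⁻¹ * taPow N x k w

/-- Truncated tensor logarithm `log^{(N)}(x) = ∑_{k=1}^N (−1)^{k+1}/k (x−1)^{⊗k}`. -/
noncomputable def taLog (N : ℕ) {d : ℕ} (x : List (Fin d) → ℝ) : List (Fin d) → ℝ :=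
  fun w => ∑ k ∈ Finset.Icc 1 N,
    ((-1 : ℝ)) ^ (k + 1) / k * taPow N (fun u => x u - taOne u) k w

/-- Inverse in the group `T₁^{(N)}`: `(1+g)⁻¹ = ∑_k (−g)^{⊗k}`. -/
noncomputable def taInv (N : ℕ) {d : ℕ} (x : List (Fin d) → ℝ) : List (Fin d) → ℝ :=
  fun w => ∑ k ∈ Finset.range (N + 1), ((-1 : ℝ)) ^ k * taPow N (fun u => x u - taOne u) k w

/-- Embedding of `ℝ^d` as 1-tensors. -/
def taInj {d : ℕ} (v : Fin d → ℝ) : List (Fin d) → ℝ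
  | [i] => v i
  | _ => 0

/-- Embedding of a matrix as a 2-tensor. -/
def ta2 {d : ℕ} (a : Fin d → Fin d → ℝ) : List (Fin d) → ℝ
  | [i, j] => a i j
  | _ => 0

/-- Homogeneous norm `‖1+g‖ = ∑_{k=1}^N |g^k|^{1/k}` on the truncated tensor algebra,
equivalent to the Carnot–Carathéodory norm on group-like elements. -/
noncomputable def taHomNorm (N : ℕ) {d : ℕ} (x : List (Fin d) → ℝ) : ℝ :=
  ∑ k ∈ Finset.Icc 1 N, (∑ f : Fin k → Fin d, |x (List.ofFn f)|) ^ ((k : ℝ)⁻¹)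

/-- The multiset of shuffles of two words. -/
def shuffles {d : ℕ} : List (Fin d) → List (Fin d) → Multiset (List (Fin d))
  | [], w => {w}
  | v, [] => {v}
  | a :: v, b :: w =>
      ((shuffles v (b :: w)).map (a :: ·)) + ((shuffles (a :: v) w).map (b :: ·))
  termination_by v w => v.length + w.length

/-!
By the shuffle product formula, `(𝔸^{ij})²` is a fixed linear combination of level-4 coordinates
of `𝐗`, so its expectation is the same combination of `exp(lC) = ∑ₖ lᵏ C^{⊗k} / k!`, `l = t - s`.
The `k = 0` term vanishes on non-empty words and the `k = 1` term is the combination of the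
coordinates of `C` itself, which vanishes by symmetry of `π₄C`. What is left is a polynomial in
`l` divisible by `l²`, hence bounded by a constant times `l²` for `0 ≤ l ≤ T`.
-/

open Finset

/-- Group-likeness of `X` up to level `N`, in its shuffle-product form. -/
def IsShuffleCompatible (N : ℕ) {d : ℕ} (X : List (Fin d) → ℝ) : Prop :=
  ∀ v w : List (Fin d), v.length + w.length ≤ N → X v * X w = ((shuffles v w).map X).sum

section TensorAlgebra

variable {N : ℕ} {d : ℕ}

theorem taOne_apply_of_ne_nil {w : List (Fin d)} (hw : w ≠ []) : taOne w = 0 :=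
  if_neg hw

theorem taMul_const_mul (c c' : ℝ) (x y : List (Fin d) → ℝ) :
    taMul N (fun u => c * x u) (fun u => c' * y u) = fun w => c * c' * taMul N x y w := by
  funext w
  simp only [taMul]
  split_ifs
  · rw [mul_sum]
    exact sum_congr rfl fun _ _ => by ring
  · simp

theorem taPow_const_mul (c : ℝ) (x : List (Fin d) → ℝ) (k : ℕ) :
    taPow N (fun u => c * x u) k = fun w => c ^ k * taPow N x k w := by
  induction k with
  | zero => simp [taPow]
  | succ k ih => simp only [taPow, ih, taMul_const_mul, ← pow_succ']

theorem taPow_one_apply (x : List (Fin d) → ℝ) {w : List (Fin d)} (hw : w.length ≤ N) :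
    taPow N x 1 w = x w := by
  simp only [taPow, taMul, if_pos hw]
  rw [sum_eq_single_of_mem w.length (self_mem_range_succ _)]
  · simp [taOne]
  · intro i hi hne
    rw [taOne_apply_of_ne_nil, mul_zero]
    simp only [ne_eq, List.drop_eq_nil_iff, not_le]
    exact lt_of_le_of_ne (Nat.lt_succ_iff.mp (mem_range.mp hi)) hne

theorem taExp_const_mul_apply (l : ℝ) (x : List (Fin d) → ℝ) (w : List (Fin d)) :
    taExp N (fun u => l * x u) w =
      ∑ k ∈ range (N + 1), ((k.factorial : ℝ))⁻¹ * taPow N x k w * l ^ k := by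
  simp only [taExp, taPow_const_mul]
  exact sum_congr rfl fun _ _ => by ring

end TensorAlgebra

section AreaSquare

variable {d : ℕ}

def areaSqComb (i j : Fin d) : (List (Fin d) → ℝ) →ₗ[ℝ] ℝ :=
  let π (w : List (Fin d)) : (List (Fin d) → ℝ) →ₗ[ℝ] ℝ := LinearMap.proj w
  π [i, i, j, j] - π [i, j, j, i] - π [j, i, i, j] + π [j, j, i, i]

@[simp]
theorem areaSqComb_apply (i j : Fin d) (F : List (Fin d) → ℝ) :
    areaSqComb i j F = F [i, i, j, j] - F [i, j, j, i] - F [j, i, i, j] + F [j, j, i, i] :=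
  rfl

theorem areaSqComb_eq_zero_of_perm_invariant {F : List (Fin d) → ℝ}
    (hF : ∀ v w : List (Fin d), v.length = 4 → v.Perm w → F v = F w) (i j : Fin d) :
    areaSqComb i j F = 0 := by
  have h₁ : F [i, i, j, j] = F [i, j, j, i] :=
    hF _ _ rfl (.cons i (List.perm_append_comm (l₁ := [i]) (l₂ := [j, j])))
  have h₂ : F [i, i, j, j] = F [j, i, i, j] :=
    hF _ _ rfl (List.perm_append_comm (l₁ := [i, i, j]) (l₂ := [j]))
  have h₃ : F [i, i, j, j] = F [j, j, i, i] :=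
    hF _ _ rfl (List.perm_append_comm (l₁ := [i, i]) (l₂ := [j, j]))
  rw [areaSqComb_apply, ← h₁, ← h₂, ← h₃]
  ring

theorem shuffles_pair_pair_sum (a b c e : Fin d) (X : List (Fin d) → ℝ) :
    ((shuffles [a, b] [c, e]).map X).sum =
      X [a, b, c, e] + X [a, c, b, e] + X [a, c, e, b] + X [c, a, b, e] + X [c, a, e, b]
        + X [c, e, a, b] := by
  simp only [shuffles, Multiset.map_singleton, Multiset.singleton_add, Multiset.map_cons,
    Multiset.add_cons, Multiset.cons_add, Multiset.sum_cons, Multiset.sum_singleton]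
  ring

theorem sq_area_eq_areaSqComb {X : List (Fin d) → ℝ} (hX : IsShuffleCompatible 4 X)
    (i j : Fin d) : ((X [i, j] - X [j, i]) / 2) ^ 2 = areaSqComb i j X := by
  have hii : X [i, j] * X [i, j] = 2 * X [i, j, i, j] + 4 * X [i, i, j, j] := by
    rw [hX _ _ le_rfl, shuffles_pair_pair_sum]; ring
  have hij : X [i, j] * X [j, i] =
      2 * X [i, j, j, i] + X [i, j, i, j] + X [j, i, j, i] + 2 * X [j, i, i, j] := by
    rw [hX _ _ le_rfl, shuffles_pair_pair_sum]; ring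
  have hjj : X [j, i] * X [j, i] = 2 * X [j, i, j, i] + 4 * X [j, j, i, i] := by
    rw [hX _ _ le_rfl, shuffles_pair_pair_sum]; ring
  rw [areaSqComb_apply]
  linear_combination (hii - 2 * hij + hjj) / 4

theorem integral_areaSqComb {Ω : Type*} [MeasurableSpace Ω] {P : Measure Ω}
    {X : Ω → List (Fin d) → ℝ} (hX : ∀ w, Integrable (fun ω => X ω w) P) (i j : Fin d) :
    ∫ ω, areaSqComb i j (X ω) ∂P = areaSqComb i j fun w => ∫ ω, X ω w ∂P := by
  simp only [areaSqComb_apply]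
  rw [integral_add, integral_sub, integral_sub] <;> fun_prop

theorem areaSqComb_taPow_one {N : ℕ} (hN : 4 ≤ N) (x : List (Fin d) → ℝ) (i j : Fin d) :
    areaSqComb i j (taPow N x 1) = areaSqComb i j x := by
  simp only [areaSqComb_apply, taPow_one_apply x (w := [_, _, _, _]) hN]

theorem areaSqComb_taExp_const_mul {N : ℕ} (hN : 4 ≤ N) {x : List (Fin d) → ℝ} {i j : Fin d}
    (hx : areaSqComb i j x = 0) (l : ℝ) :
    areaSqComb i j (taExp N fun u => l * x u) =
      ∑ k ∈ range (N - 1),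
        ((k + 2).factorial : ℝ)⁻¹ * areaSqComb i j (taPow N x (k + 2)) * l ^ (k + 2) := by
  have hexp : (taExp N fun u => l * x u) =
      ∑ k ∈ range (N + 1), (((k.factorial : ℝ))⁻¹ * l ^ k) • taPow N x k := by
    funext w
    simp only [taExp_const_mul_apply, Finset.sum_apply, Pi.smul_apply, smul_eq_mul]
    exact sum_congr rfl fun _ _ => by ring
  have h₀ : areaSqComb i j (taPow N x 0) = 0 := by simp [taPow, taOne]
  have hN' : N + 1 = N - 1 + 1 + 1 := by omega
  rw [hexp, map_sum, hN', sum_range_succ', sum_range_succ']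
  simp only [map_smul, smul_eq_mul, areaSqComb_taPow_one hN, hx, h₀, mul_zero, add_zero]
  exact sum_congr rfl fun _ _ => by ring

end AreaSquare

theorem sum_mul_pow_add_two_le (a : ℕ → ℝ) (n : ℕ) {l T : ℝ} (hl : 0 ≤ l) (hlT : l ≤ T) :
    ∑ k ∈ range n, a k * l ^ (k + 2) ≤ (∑ k ∈ range n, |a k| * T ^ k) * l ^ 2 := by
  rw [sum_mul]
  refine sum_le_sum fun k _ => ?_
  calc a k * l ^ (k + 2) = a k * l ^ k * l ^ 2 := by ring
    _ ≤ |a k| * l ^ k * l ^ 2 := by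
        refine mul_le_mul_of_nonneg_right ?_ (by positivity)
        simpa [abs_mul, abs_of_nonneg (pow_nonneg hl k)] using le_abs_self (a k * l ^ k)
    _ ≤ |a k| * T ^ k * l ^ 2 := by gcongr

theorem area_second_moment_via_expected_signature_general
    {d : ℕ} {Ω : Type*} [MeasurableSpace Ω] (P : Measure Ω)
    (T : ℝ) (hT : 0 < T)
    (XX : ℝ → ℝ → Ω → (List (Fin d) → ℝ))
    (C : List (Fin d) → ℝ)
    (hCsym : ∀ v w : List (Fin d), v.length = 4 → v.Perm w → C v = C w)
    (hint : ∀ s t : ℝ, ∀ w : List (Fin d), Integrable (fun ω => XX s t ω w) P)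
    -- `𝐗_{s,t}` is group-like: the shuffle product formula holds
    (hshuffle : ∀ s t : ℝ, ∀ ω : Ω, ∀ v w : List (Fin d), v.length + w.length ≤ 4 →
      XX s t ω v * XX s t ω w = ((shuffles v w).map (XX s t ω)).sum)
    -- expected signature of exponential Lévy–Kintchine form
    (hexp : ∀ s t : ℝ, 0 ≤ s → s ≤ t → t ≤ T → ∀ w : List (Fin d),
      (∫ ω, XX s t ω w ∂P) = taExp 4 (fun u => (t - s) * C u) w) :
    (∀ i j : Fin d, C [i, i, j, j] - C [i, j, j, i] - C [j, i, i, j] + C [j, j, i, i] = 0) ∧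
    (∀ s t : ℝ, ∀ ω : Ω, ∀ i j : Fin d, i ≠ j →
      ((XX s t ω [i, j] - XX s t ω [j, i]) / 2) ^ 2 =
        XX s t ω [i, i, j, j] - XX s t ω [i, j, j, i]
          - XX s t ω [j, i, i, j] + XX s t ω [j, j, i, i]) ∧
    (∃ C₂ : ℝ, 0 ≤ C₂ ∧ ∀ s t : ℝ, 0 ≤ s → s ≤ t → t ≤ T → ∀ i j : Fin d, i ≠ j →
      (∫ ω, ((XX s t ω [i, j] - XX s t ω [j, i]) / 2) ^ 2 ∂P) ≤ C₂ * (t - s) ^ 2) := by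
  have hC : ∀ i j : Fin d, areaSqComb i j C = 0 := areaSqComb_eq_zero_of_perm_invariant hCsym
  have hsq : ∀ s t ω (i j : Fin d),
      ((XX s t ω [i, j] - XX s t ω [j, i]) / 2) ^ 2 = areaSqComb i j (XX s t ω) :=
    fun s t ω => sq_area_eq_areaSqComb (hshuffle s t ω)
  refine ⟨hC, fun s t ω i j _ => hsq s t ω i j, ?_⟩
  let a : Fin d × Fin d → ℕ → ℝ := fun p k =>
    ((k + 2).factorial : ℝ)⁻¹ * areaSqComb p.1 p.2 (taPow 4 C (k + 2))
  let K : Fin d × Fin d → ℝ := fun p => ∑ k ∈ range 3, |a p k| * T ^ k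
  have hK : ∀ p, 0 ≤ K p := fun p => sum_nonneg fun k _ => by positivity
  refine ⟨∑ p, K p, sum_nonneg fun p _ => hK p, fun s t hs hst htT i j _ => ?_⟩
  calc (∫ ω, ((XX s t ω [i, j] - XX s t ω [j, i]) / 2) ^ 2 ∂P)
      = areaSqComb i j (taExp 4 fun u => (t - s) * C u) := by
        simp only [hsq, integral_areaSqComb (hint s t), hexp s t hs hst htT]
    _ = ∑ k ∈ range 3, a (i, j) k * (t - s) ^ (k + 2) :=
        areaSqComb_taExp_const_mul le_rfl (hC i j) _
    _ ≤ K (i, j) * (t - s) ^ 2 := sum_mul_pow_add_two_le _ _ (by linarith) (by linarith)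
    _ ≤ (∑ p, K p) * (t - s) ^ 2 := by
        gcongr
        exact single_le_sum (fun p _ => hK p) (mem_univ (i, j))

/-- Suppose the expected level-4 signature of a group-like (shuffle-compatible)
process satisfies `E[𝐗^{(4)}_{s,t}] = exp(C(t−s))` with symmetric level-4 component of `C`.
Then the algebraic shuffle identity `(𝔸^{ij})² = 𝐗^{iijj} − 𝐗^{ijji} − 𝐗^{jiij} + 𝐗^{jjii}`
holds, the first-order coefficient `C^{iijj} − C^{ijji} − C^{jiij} + C^{jjii}` vanishes, and
consequently `E[(𝔸^{ij}_{s,t})²] = O(|t−s|²)`. -/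
theorem area_second_moment_via_expected_signature
    {d : ℕ} {Ω : Type*} [MeasurableSpace Ω] (P : Measure Ω) [IsProbabilityMeasure P]
    (T : ℝ) (hT : 0 < T)
    (XX : ℝ → ℝ → Ω → (List (Fin d) → ℝ))
    (C : List (Fin d) → ℝ) (hC0 : C [] = 0)
    (hCsym : ∀ v w : List (Fin d), v.length = 4 → v.Perm w → C v = C w)
    (hint : ∀ s t : ℝ, ∀ w : List (Fin d), Integrable (fun ω => XX s t ω w) P)
    -- `𝐗_{s,t}` is group-like: the shuffle product formula holds
    (hshuffle : ∀ s t : ℝ, ∀ ω : Ω, ∀ v w : List (Fin d), v.length + w.length ≤ 4 →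
      XX s t ω v * XX s t ω w = ((shuffles v w).map (XX s t ω)).sum)
    -- expected signature of exponential Lévy–Kintchine form
    (hexp : ∀ s t : ℝ, 0 ≤ s → s ≤ t → t ≤ T → ∀ w : List (Fin d),
      (∫ ω, XX s t ω w ∂P) = taExp 4 (fun u => (t - s) * C u) w) :
    (∀ i j : Fin d, C [i, i, j, j] - C [i, j, j, i] - C [j, i, i, j] + C [j, j, i, i] = 0) ∧
    (∀ s t : ℝ, ∀ ω : Ω, ∀ i j : Fin d, i ≠ j →
      ((XX s t ω [i, j] - XX s t ω [j, i]) / 2) ^ 2 =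
        XX s t ω [i, i, j, j] - XX s t ω [i, j, j, i]
          - XX s t ω [j, i, i, j] + XX s t ω [j, j, i, i]) ∧
    (∃ C₂ : ℝ, 0 ≤ C₂ ∧ ∀ s t : ℝ, 0 ≤ s → s ≤ t → t ≤ T → ∀ i j : Fin d, i ≠ j →
      (∫ ω, ((XX s t ω [i, j] - XX s t ω [j, i]) / 2) ^ 2 ∂P) ≤ C₂ * (t - s) ^ 2) :=
  area_second_moment_via_expected_signature_general P T hT XX C hCsym hint hshuffle hexp
end
end

section
/- Let 𝐊 be a Lévy measure on the group G^{(2)}(ℝ^d) (∫(|g|² ∧ 1)𝐊(dg) < ∞ where |g| is the Euclidean norm of log g ∈ ℝ^d ⊕ so(d)). Then its Carnot–Carathéodory Blumenthal–Getoor index β := inf{q > 0 : ∫(‖g‖_{CC}^q ∧ 1)𝐊(dg) < ∞} satisfies β ≤ 4. -/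
/-!
Writing `u = ‖x‖` and `s = ‖a‖`, the Carnot–Carathéodory bound gives
`cc(g)⁴ ≲ (u + √s)⁴ ≲ u⁴ + s²`. Away from the identity both `cc(g)⁴ ∧ 1` and `(u² + s²) ∧ 1`
are bounded, and near it `u ≤ 1`, so `u⁴ ≤ u²`. Hence `cc(g)⁴ ∧ 1 ≲ |log g|² ∧ 1`, which is
`KK`-integrable, so `q = 4` lies in the set whose infimum is the index.
-/

open MeasureTheory

lemma min_add_rpow_half_pow_four_le {u s : ℝ} (hu : 0 ≤ u) (hs : 0 ≤ s) :
    min ((u + s ^ (1 / 2 : ℝ)) ^ 4) 1 ≤ 8 * min (u ^ 2 + s ^ 2) 1 := by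
  rcases le_or_gt 1 (u ^ 2 + s ^ 2) with hfar | hnear
  · rw [min_eq_right hfar]
    linarith [min_le_right ((u + s ^ (1 / 2 : ℝ)) ^ 4) 1]
  · have hu1 : u ≤ 1 := by nlinarith
    have hu4 : u ^ 4 ≤ u ^ 2 := pow_le_pow_of_le_one hu hu1 (by norm_num)
    have hsqrt4 : (s ^ (1 / 2 : ℝ)) ^ 4 = s ^ 2 := by
      rw [← Real.rpow_natCast, ← Real.rpow_mul hs]
      norm_num
    calc min ((u + s ^ (1 / 2 : ℝ)) ^ 4) 1 ≤ (u + s ^ (1 / 2 : ℝ)) ^ 4 := min_le_left _ _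
      _ ≤ 2 ^ 3 * (u ^ 4 + (s ^ (1 / 2 : ℝ)) ^ 4) := add_pow_le hu (by positivity) 4
      _ ≤ 8 * (u ^ 2 + s ^ 2) := by rw [hsqrt4]; linarith
      _ = 8 * min (u ^ 2 + s ^ 2) 1 := by rw [min_eq_left hnear.le]

lemma min_rpow_four_one_le_of_le_mul {f u s C : ℝ} (hf : 0 ≤ f)
    (hfC : f ≤ C * (u + s ^ (1 / 2 : ℝ))) (hu : 0 ≤ u) (hs : 0 ≤ s) :
    min (f ^ (4 : ℝ)) 1 ≤ 8 * max (C ^ 4) 1 * min (u ^ 2 + s ^ 2) 1 := by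
  set K := max (C ^ 4) 1
  have hf4 : f ^ 4 ≤ K * (u + s ^ (1 / 2 : ℝ)) ^ 4 :=
    calc f ^ 4 ≤ (C * (u + s ^ (1 / 2 : ℝ))) ^ 4 := pow_le_pow_left₀ hf hfC 4
      _ = C ^ 4 * (u + s ^ (1 / 2 : ℝ)) ^ 4 := mul_pow _ _ _
      _ ≤ K * (u + s ^ (1 / 2 : ℝ)) ^ 4 := by gcongr; exact le_max_left _ _
  calc min (f ^ (4 : ℝ)) 1 ≤ min (K * (u + s ^ (1 / 2 : ℝ)) ^ 4) K := by
        rw [Real.rpow_ofNat]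
        exact min_le_min hf4 (le_max_right _ _)
    _ = K * min ((u + s ^ (1 / 2 : ℝ)) ^ 4) 1 := by
        rw [mul_min_of_nonneg _ _ (by positivity), mul_one]
    _ ≤ K * (8 * min (u ^ 2 + s ^ 2) 1) := by
        gcongr
        exact min_add_rpow_half_pow_four_le hu hs
    _ = 8 * K * min (u ^ 2 + s ^ 2) 1 := by ring

lemma lintegral_ofReal_lt_top_of_le_const_mul {α : Type*} [MeasurableSpace α] {μ : Measure α}
    {f g : α → ℝ} {M : ℝ} (hM : 0 ≤ M) (hfg : ∀ x, f x ≤ M * g x)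
    (hg : ∫⁻ x, ENNReal.ofReal (g x) ∂μ < ⊤) : ∫⁻ x, ENNReal.ofReal (f x) ∂μ < ⊤ :=
  calc ∫⁻ x, ENNReal.ofReal (f x) ∂μ ≤ ∫⁻ x, ENNReal.ofReal M * ENNReal.ofReal (g x) ∂μ :=
        lintegral_mono fun x => (ENNReal.ofReal_le_ofReal (hfg x)).trans_eq (ENNReal.ofReal_mul hM)
    _ = ENNReal.ofReal M * ∫⁻ x, ENNReal.ofReal (g x) ∂μ :=
        lintegral_const_mul' _ _ ENNReal.ofReal_ne_top
    _ < ⊤ := ENNReal.mul_lt_top ENNReal.ofReal_lt_top hg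

theorem ccbg_index_le_four_general
    {d : ℕ}
    (KK : Measure ((Fin d → ℝ) × (Fin d → Fin d → ℝ)))
    -- `KK` is a Lévy measure: no mass at the identity, integrates `|log g|² ∧ 1`
    (hlevy : (∫⁻ g, ENNReal.ofReal (min (‖g.1‖ ^ 2 + ‖g.2‖ ^ 2) 1) ∂KK) < ⊤)
    -- `cc` is (equivalent to) the Carnot–Carathéodory norm
    (cc : ((Fin d → ℝ) × (Fin d → Fin d → ℝ)) → ℝ)
    (hcc : ∃ c C : ℝ, 0 < c ∧ 0 < C ∧ ∀ g,
      c * (‖g.1‖ + ‖g.2‖ ^ ((1:ℝ)/2)) ≤ cc g ∧ cc g ≤ C * (‖g.1‖ + ‖g.2‖ ^ ((1:ℝ)/2))) :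
    sInf {q : ℝ | 0 < q ∧ (∫⁻ g, ENNReal.ofReal (min (cc g ^ q) 1) ∂KK) < ⊤} ≤ 4 := by
  obtain ⟨c, C, hc, -, hbound⟩ := hcc
  have hcc_nonneg : ∀ g, 0 ≤ cc g := fun g =>
    (mul_nonneg hc.le (by positivity)).trans (hbound g).1
  have hpointwise : ∀ g, min (cc g ^ (4 : ℝ)) 1 ≤
      8 * max (C ^ 4) 1 * min (‖g.1‖ ^ 2 + ‖g.2‖ ^ 2) 1 := fun g =>
    min_rpow_four_one_le_of_le_mul (hcc_nonneg g) (hbound g).2 (norm_nonneg _) (norm_nonneg _)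
  refine csInf_le ⟨0, fun q hq => hq.1.le⟩ ⟨by norm_num, ?_⟩
  exact lintegral_ofReal_lt_top_of_le_const_mul (by positivity) hpointwise hlevy

/-- Let `KK` be a Lévy measure on `G^{(2)}(ℝ^d)`, presented in logarithmic
coordinates `log g = (x, a) ∈ ℝ^d ⊕ so(d)`, i.e. `∫ (|g|² ∧ 1) KK(dg) < ∞` for the Euclidean
norm of `log g`, and let `cc` be the Carnot–Carathéodory norm, so that
`cc(g) ≍ ‖x‖ + ‖a‖^{1/2}`.  Then the Carnot–Carathéodory Blumenthal–Getoor index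
`β = inf{q > 0 : ∫ (cc(g)^q ∧ 1) KK(dg) < ∞}` satisfies `β ≤ 4`. -/
theorem ccbg_index_le_four
    {d : ℕ}
    (KK : Measure ((Fin d → ℝ) × (Fin d → Fin d → ℝ)))
    -- the second (so(d)) coordinate is antisymmetric KK-a.e.
    (hso : ∀ᵐ g ∂KK, ∀ i j, g.2 i j = -g.2 j i)
    -- `KK` is a Lévy measure: no mass at the identity, integrates `|log g|² ∧ 1`
    (h0 : KK {0} = 0)
    (hlevy : (∫⁻ g, ENNReal.ofReal (min (‖g.1‖ ^ 2 + ‖g.2‖ ^ 2) 1) ∂KK) < ⊤)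
    -- `cc` is (equivalent to) the Carnot–Carathéodory norm
    (cc : ((Fin d → ℝ) × (Fin d → Fin d → ℝ)) → ℝ)
    (hcc : ∃ c C : ℝ, 0 < c ∧ 0 < C ∧ ∀ g,
      c * (‖g.1‖ + ‖g.2‖ ^ ((1:ℝ)/2)) ≤ cc g ∧ cc g ≤ C * (‖g.1‖ + ‖g.2‖ ^ ((1:ℝ)/2))) :
    sInf {q : ℝ | 0 < q ∧ (∫⁻ g, ENNReal.ofReal (min (cc g ^ q) 1) ∂KK) < ⊤} ≤ 4 :=
  ccbg_index_le_four_general KK hlevy cc hcc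
end
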